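/- If a CHC system S has a solution (an interpretation of relational predicates satisfying every clause and interpreting the query predicate as False), then S is infeasible, i.e., S has no models. -/

import Mathlib

/-- A Constrained Horn Clause: a list of body predicates, a constraint relating
the body valuations to a head valuation, and a head predicate. -/
structure Clause (R V : Type) where
  body : List R
  constr : List V → V → Prop
  head : R

/-- A CHC system: a set of clauses plus a query predicate. -/
structure CHCSystem (R V : Type) where
  clauses : Set (Clause R V)
  query : R

/-- Derivations (models rooted at a predicate): a derivation tree labeled by
clauses with per-node valuations satisfying each clause's constraint. -/
inductive Derives {R V : Type} (S : CHCSystem R V) : R → V → Prop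
  | step (c : Clause R V) (hc : c ∈ S.clauses) (vs : List V) (v : V)
      (hlen : vs.length = c.body.length)
      (hbody : ∀ (k : ℕ) (hk : k < vs.length) (hk' : k < c.body.length),
          Derives S (c.body.get ⟨k, hk'⟩) (vs.get ⟨k, hk⟩))
      (hconstr : c.constr vs v) :
      Derives S c.head v

/-- A solution: an interpretation of predicates as sets of valuations closed
under every clause and interpreting the query as False (the empty set). -/
def IsSolution {R V : Type} (S : CHCSystem R V) (i : R → Set V) : Prop :=
  (∀ c ∈ S.clauses, ∀ (vs : List V) (v : V), vs.length = c.body.length →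
      (∀ (k : ℕ) (hk : k < vs.length) (hk' : k < c.body.length),
        vs.get ⟨k, hk⟩ ∈ i (c.body.get ⟨k, hk'⟩)) →
      c.constr vs v → v ∈ i c.head) ∧
  i S.query = ∅

/-- The first conjunct of `IsSolution`. -/
def SatisfiesClauses {R V : Type} (S : CHCSystem R V) (i : R → Set V) : Prop :=
  ∀ c ∈ S.clauses, ∀ (vs : List V) (v : V), vs.length = c.body.length →
    (∀ (k : ℕ) (hk : k < vs.length) (hk' : k < c.body.length),
      vs.get ⟨k, hk⟩ ∈ i (c.body.get ⟨k, hk'⟩)) →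
    c.constr vs v → v ∈ i c.head

theorem Derives.mem_of_satisfiesClauses {R V : Type} {S : CHCSystem R V} {i : R → Set V}
    (hi : SatisfiesClauses S i) {r : R} {v : V} (h : Derives S r v) : v ∈ i r := by
  induction h with
  | step c hc vs v hlen _ hconstr ih => exact hi c hc vs v hlen ih hconstr

/-- If a CHC system has a solution, then it is infeasible: it has no models
(no derivation of the query predicate). -/
theorem stmt1 {R V : Type} (S : CHCSystem R V) (i : R → Set V)
    (hsol : IsSolution S i) : ∀ v : V, ¬ Derives S S.query v := by
  intro v h
  have hmem : v ∈ i S.query := h.mem_of_satisfiesClauses hsol.1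
  rw [hsol.2] at hmem
  exact hmem
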